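/- arXiv:2603.02013 — 4 statements merged into one kernel-verified Lean document; each statement's English description precedes it below -/
import Mathlib

section
/- Let K be a differential field of characteristic 0 that is closed under integration (∂K = K) and satisfies K† = K (every element is a logarithmic derivative of some nonzero element). Let A ∈ K[∂] be a monic linear differential operator of order r. Then the dimension over the constant field C of the kernel of A in K equals r if and only if A splits over K, i.e., A = (∂ − b₁)⋯(∂ − b_r) for some b₁, …, b_r ∈ K. -/
/-!
If `A = B ∘ (∂ - b)` where `∂ - b` is surjective with kernel `C u`, `u ≠ 0`, then `ker A` has a
`C`-basis of size `n + 1` exactly when `ker B` has one of size `n`: lift a basis of `ker B` through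
`∂ - b` and add `u`. Closure under integration makes `∂ - b` surjective as soon as it has a nonzero
solution `u` (solve `(u z)' - b u z = u z' = g`), and `K† = K` provides such a `u` for every `b`;
so a split operator of order `r` has an `r`-dimensional kernel. Conversely, a nonzero solution `y`
of `A` gives `b = y'/y`; right division of `A` by `∂ - b` leaves a remainder of order `0` which
vanishes at `y`, so `A = B ∘ (∂ - b)` and induction applies to `B`.
-/

open Function

theorem List.foldr_comp_eq_foldr_comp_id_comp {α : Type*} (l : List (α → α)) (f : α → α) :
    l.foldr (· ∘ ·) f = l.foldr (· ∘ ·) id ∘ f := by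
  induction l with
  | nil => rfl
  | cons g l ih => simp only [List.foldr_cons, ih, comp_assoc]

namespace Derivation

section CommRing

variable {R K : Type*} [CommRing R] [CommRing K] [Algebra R K] (D : Derivation R K K)

/-- Operators `∑_{i<n} aᵢ ∂ⁱ`: the `K`-action on `K → K` is pointwise, i.e. multiplication of the
coefficients from the left. -/
def orderLT (n : ℕ) : Submodule K (K → K) :=
  Submodule.span K (Set.range fun i : Fin n => (⇑D)^[i])

def linFactor (b : K) : K →+ K :=
  (D : K →ₗ[R] K).toAddMonoidHom - AddMonoidHom.mulLeft b

def splitOp {n : ℕ} (b : Fin n → K) : K → K :=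
  (List.ofFn fun i : Fin n => ⇑(linFactor D (b i))).foldr (· ∘ ·) id

def IsSolutionBasis (A : K → K) {n : ℕ} (y : Fin n → K) : Prop :=
  (∀ i, A (y i) = 0) ∧
  (∀ c : Fin n → K, (∀ i, D (c i) = 0) → ∑ i, c i * y i = 0 → ∀ i, c i = 0) ∧
  (∀ w, A w = 0 → ∃ c : Fin n → K, (∀ i, D (c i) = 0) ∧ w = ∑ i, c i * y i)

variable {D}

theorem linFactor_apply (b u : K) : linFactor D b u = D u - b * u := rfl

theorem iterate_mem_orderLT {i n : ℕ} (h : i < n) : (⇑D)^[i] ∈ orderLT D n :=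
  Submodule.subset_span ⟨⟨i, h⟩, rfl⟩

theorem orderLT_mono {m n : ℕ} (h : m ≤ n) : orderLT D m ≤ orderLT D n :=
  Submodule.span_le.2 <| Set.range_subset_iff.2 fun i => iterate_mem_orderLT (i.2.trans_le h)

theorem orderLT_zero : orderLT D 0 = ⊥ := by
  simp [orderLT]

theorem apply_zero_of_mem_orderLT {n : ℕ} {L : K → K} (hL : L ∈ orderLT D n) : L 0 = 0 := by
  induction hL using Submodule.span_induction with
  | mem _ h => obtain ⟨i, rfl⟩ := h; exact iterate_map_zero D i
  | zero => rfl
  | add _ _ _ _ hf hg => simp [hf, hg]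
  | smul _ _ _ hf => simp [hf]

theorem comp_mem_orderLT_succ {n : ℕ} {L : K → K} (hL : L ∈ orderLT D n) :
    ⇑D ∘ L ∈ orderLT D (n + 1) := by
  induction hL using Submodule.span_induction with
  | mem _ h =>
    obtain ⟨i, rfl⟩ := h
    rw [← iterate_succ']
    exact iterate_mem_orderLT (Nat.succ_lt_succ i.2)
  | zero =>
    rw [show ⇑D ∘ (0 : K → K) = 0 from funext fun _ => map_zero D]
    exact zero_mem _
  | add f g _ _ hf hg =>
    rw [show ⇑D ∘ (f + g) = ⇑D ∘ f + ⇑D ∘ g from funext fun _ => map_add D _ _]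
    exact add_mem hf hg
  | smul c f hf hDf =>
    have : ⇑D ∘ (c • f) = c • (⇑D ∘ f) + D c • f := by
      funext x; simp [Derivation.leibniz, mul_comm]
    rw [this]
    exact add_mem (Submodule.smul_mem _ c hDf)
      (Submodule.smul_mem _ _ (orderLT_mono n.le_succ hf))

theorem iterate_comp_mul_mem_orderLT (b : K) (i : ℕ) :
    (⇑D)^[i] ∘ (b * ·) ∈ orderLT D (i + 1) := by
  induction i with
  | zero =>
    exact Submodule.smul_mem _ b (iterate_mem_orderLT (D := D) zero_lt_one)
  | succ i ih =>
    rw [iterate_succ', comp_assoc]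
    exact comp_mem_orderLT_succ ih

/-- Right division by `∂ - b` (`funLeft M B = B ∘ M`) with a remainder of order `0`. -/
theorem orderLT_succ_le (b : K) (n : ℕ) :
    orderLT D (n + 1) ≤
      (orderLT D n).map (LinearMap.funLeft K K (linFactor D b)) ⊔ K ∙ id := by
  induction n with
  | zero =>
    refine Submodule.span_le.2 (Set.range_subset_iff.2 fun ⟨i, hi⟩ => ?_)
    obtain rfl : i = 0 := by omega
    exact Submodule.mem_sup_right (Submodule.mem_span_singleton_self _)
  | succ n ih =>
    refine Submodule.span_le.2 (Set.range_subset_iff.2 fun ⟨i, hi⟩ => ?_)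
    cases i with
    | zero => exact Submodule.mem_sup_right (Submodule.mem_span_singleton_self _)
    | succ j =>
      have hsplit : (⇑D)^[j + 1] =
          LinearMap.funLeft K K (linFactor D b) (⇑D)^[j] + (⇑D)^[j] ∘ (b * ·) := by
        funext u
        simp [iterate_succ_apply, linFactor_apply]
      rw [hsplit]
      refine add_mem (Submodule.mem_sup_left
        (Submodule.mem_map_of_mem (iterate_mem_orderLT (by omega)))) ?_
      have h := (orderLT_mono (by omega)).trans ih (iterate_comp_mul_mem_orderLT b j)
      have hmono : (orderLT D n).map (LinearMap.funLeft K K (linFactor D b)) ≤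
          (orderLT D (n + 1)).map (LinearMap.funLeft K K (linFactor D b)) :=
        Submodule.map_mono (orderLT_mono n.le_succ)
      exact sup_le_sup_right hmono _ h

theorem exists_iterate_add_eq_comp_linFactor (b : K) {n : ℕ} {L : K → K}
    (hL : L ∈ orderLT D (n + 1)) :
    ∃ L' ∈ orderLT D n, ∃ ρ : K,
      (⇑D)^[n + 1] + L = ((⇑D)^[n] + L') ∘ linFactor D b + ρ • id := by
  obtain ⟨_, ⟨L', hL', rfl⟩, _, hρ, hsum⟩ := Submodule.mem_sup.1 <|
    orderLT_succ_le b n (add_mem hL (iterate_comp_mul_mem_orderLT b n))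
  obtain ⟨ρ, rfl⟩ := Submodule.mem_span_singleton.1 hρ
  refine ⟨L', hL', ρ, funext fun u => ?_⟩
  have h := congrFun hsum u
  simp only [Pi.add_apply, LinearMap.funLeft_apply, Pi.smul_apply, comp_apply, id,
    smul_eq_mul] at h ⊢
  rw [iterate_succ_apply, add_assoc, h, linFactor_apply, iterate_map_sub]
  ring

theorem linFactor_const_mul {b c : K} (hc : D c = 0) (x : K) :
    linFactor D b (c * x) = c * linFactor D b x := by
  simp only [linFactor_apply, Derivation.leibniz, hc, smul_eq_mul]
  ring

theorem linFactor_sum_const_mul {b : K} {n : ℕ} {c : Fin n → K} (hc : ∀ i, D (c i) = 0)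
    (x : Fin n → K) :
    linFactor D b (∑ i, c i * x i) = ∑ i, c i * linFactor D b (x i) := by
  simp only [map_sum, linFactor_const_mul (hc _)]

theorem IsSolutionBasis.ne_zero [Nontrivial K] {A : K → K} {n : ℕ} {y : Fin n → K}
    (hy : IsSolutionBasis D A y) (i : Fin n) : y i ≠ 0 := by
  intro h
  have := hy.2.1 (Pi.single i 1) (fun j => by by_cases hj : j = i <;> simp [hj])
    (by simp [Pi.single_apply, h]) i
  simp at this

theorem splitOp_elim0 (b : Fin 0 → K) : splitOp D b = id := rfl

theorem splitOp_snoc {n : ℕ} (b : Fin n → K) (c : K) :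
    splitOp D (Fin.snoc b c) = splitOp D b ∘ linFactor D c := by
  rw [splitOp, splitOp, List.ofFn_succ']
  simp only [Fin.snoc_castSucc, Fin.snoc_last, List.concat_eq_append, List.foldr_append,
    List.foldr_cons, List.foldr_nil, comp_id]
  exact List.foldr_comp_eq_foldr_comp_id_comp _ _

theorem splitOp_apply_zero {n : ℕ} (b : Fin n → K) : splitOp D b 0 = 0 := by
  induction n with
  | zero => rfl
  | succ n ih => rw [← Fin.snoc_init_self b, splitOp_snoc, comp_apply, map_zero, ih]

end CommRing

section Field

variable {R K : Type*} [CommRing R] [Field K] [Algebra R K] {D : Derivation R K K}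

theorem eq_const_mul_of_linFactor_eq_zero {b u w : K} (hu : u ≠ 0)
    (hMu : linFactor D b u = 0) (hMw : linFactor D b w = 0) : ∃ e, D e = 0 ∧ w = e * u := by
  refine ⟨w / u, ?_, by field_simp⟩
  rw [linFactor_apply, sub_eq_zero] at hMu hMw
  rw [Derivation.leibniz_div, hMu, hMw]
  simp only [smul_eq_mul]
  ring

theorem linFactor_surjective (hint : Surjective D) {b u : K} (hu : u ≠ 0)
    (hMu : linFactor D b u = 0) : Surjective (linFactor D b) := by
  intro g
  obtain ⟨z, hz⟩ := hint (g / u)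
  rw [linFactor_apply, sub_eq_zero] at hMu
  refine ⟨z * u, ?_⟩
  rw [linFactor_apply, Derivation.leibniz, hz, hMu, smul_eq_mul, smul_eq_mul]
  field_simp
  ring

theorem IsSolutionBasis.of_comp_linFactor (hint : Surjective D) {B : K → K} {b : K} {n : ℕ}
    {y : Fin (n + 1) → K} (hy : IsSolutionBasis D (B ∘ linFactor D b) y)
    (hb : linFactor D b (y 0) = 0) :
    IsSolutionBasis D B fun i => linFactor D b (y i.succ) := by
  have hy0 := hy.ne_zero 0
  obtain ⟨hsol, hind, hspan⟩ := hy
  refine ⟨fun i => hsol i.succ, fun d hd hsum => ?_, fun v hv => ?_⟩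
  · rw [← linFactor_sum_const_mul hd] at hsum
    obtain ⟨e, he, hdy⟩ := eq_const_mul_of_linFactor_eq_zero hy0 hb hsum
    have hc := hind (Fin.cons (-e) d) (fun i => Fin.cases (by simp [he]) hd i)
      (by simp [Fin.sum_univ_succ, hdy])
    exact fun i => by simpa using hc i.succ
  · obtain ⟨w, rfl⟩ := linFactor_surjective hint hy0 hb v
    obtain ⟨c, hc, rfl⟩ := hspan w hv
    refine ⟨fun i => c i.succ, fun i => hc i.succ, ?_⟩
    rw [linFactor_sum_const_mul hc, Fin.sum_univ_succ, hb, mul_zero, zero_add]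

theorem IsSolutionBasis.exists_comp_linFactor (hint : Surjective D) {B : K → K} {n : ℕ}
    {y : Fin n → K} (hy : IsSolutionBasis D B y) (hB : B 0 = 0) {b u : K} (hu : u ≠ 0)
    (hMu : linFactor D b u = 0) :
    ∃ z : Fin (n + 1) → K, IsSolutionBasis D (B ∘ linFactor D b) z := by
  obtain ⟨hsol, hind, hspan⟩ := hy
  choose x hx using linFactor_surjective hint hu hMu
  refine ⟨Fin.cons u (x ∘ y), fun i => ?_, fun c hc hsum => ?_, fun w hw => ?_⟩
  · induction i using Fin.cases with
    | zero => simp [hMu, hB]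
    | succ i => simp [hx, hsol i]
  · rw [Fin.sum_univ_succ] at hsum
    have hrest : ∑ i : Fin n, c i.succ * y i = 0 := by
      simpa [linFactor_const_mul (hc 0), linFactor_sum_const_mul (fun i => hc i.succ), hMu, hx]
        using congrArg (linFactor D b) hsum
    have hc' := hind _ (fun i => hc i.succ) hrest
    have hc0 : c 0 = 0 := by simpa [hc', hu] using hsum
    exact fun i => Fin.cases hc0 hc' i
  · obtain ⟨d, hd, hMw⟩ := hspan _ hw
    have hker : linFactor D b (w - ∑ i, d i * x (y i)) = 0 := by
      rw [map_sub, linFactor_sum_const_mul hd]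
      simp [hx, hMw]
    obtain ⟨e, he, hwe⟩ := eq_const_mul_of_linFactor_eq_zero hu hMu hker
    refine ⟨Fin.cons e d, fun i => Fin.cases he hd i, ?_⟩
    rw [Fin.sum_univ_succ]
    simp only [Fin.cons_zero, Fin.cons_succ, comp_apply]
    linear_combination hwe

theorem exists_isSolutionBasis_splitOp (hint : Surjective D)
    (hlog : ∀ a : K, ∃ y : K, y ≠ 0 ∧ D y / y = a) {n : ℕ} (b : Fin n → K) :
    ∃ y : Fin n → K, IsSolutionBasis D (splitOp D b) y := by
  induction n with
  | zero =>
    refine ⟨Fin.elim0, fun i => i.elim0, fun _ _ _ i => i.elim0, fun w hw => ?_⟩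
    exact ⟨Fin.elim0, fun i => i.elim0, by simpa [splitOp_elim0] using hw⟩
  | succ n ih =>
    obtain ⟨u, hu, hub⟩ := hlog (b (Fin.last n))
    obtain ⟨y, hy⟩ := ih (Fin.init b)
    rw [← Fin.snoc_init_self b, splitOp_snoc]
    exact hy.exists_comp_linFactor hint (splitOp_apply_zero _) hu
      (by rw [linFactor_apply, ← hub]; field_simp; ring)

theorem exists_splitOp_eq_of_isSolutionBasis (hint : Surjective D) {n : ℕ} {L : K → K}
    (hL : L ∈ orderLT D n) {y : Fin n → K} (hy : IsSolutionBasis D ((⇑D)^[n] + L) y) :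
    ∃ b : Fin n → K, (⇑D)^[n] + L = splitOp D b := by
  induction n generalizing L with
  | zero =>
    rw [orderLT_zero, Submodule.mem_bot] at hL
    exact ⟨Fin.elim0, by simp [hL, splitOp_elim0]⟩
  | succ n ih =>
    have hy0 := hy.ne_zero 0
    -- `b = y₀'/y₀` makes `y₀` a solution of `∂ - b`, so the remainder of the division vanishes
    obtain ⟨b, hb⟩ : ∃ b, linFactor D b (y 0) = 0 :=
      ⟨D (y 0) / y 0, by rw [linFactor_apply, div_mul_cancel₀ _ hy0, sub_self]⟩
    obtain ⟨L', hL', ρ, hdiv⟩ := exists_iterate_add_eq_comp_linFactor b hL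
    have hρ : ρ = 0 := by
      have h := congrFun hdiv (y 0)
      rw [hy.1 0] at h
      simpa [hb, apply_zero_of_mem_orderLT hL', hy0, eq_comm] using h
    rw [hρ, zero_smul, add_zero] at hdiv
    rw [hdiv] at hy
    obtain ⟨b', hb'⟩ := ih hL' (hy.of_comp_linFactor hint hb)
    exact ⟨Fin.snoc b' b, by rw [hdiv, hb', splitOp_snoc]⟩

end Field

end Derivation

/-- Let `K` be a differential field of characteristic 0 closed under integration
(`∂K = K`) with `K† = K`. Let `A = ∂^r + a_{r-1}∂^{r-1} + ⋯ + a_0` be a monic linear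
differential operator of order `r` over `K`. Then the kernel of `A` in `K` has
dimension `r` over the constant field `C = ker ∂` (expressed: there are `r` solutions
which are `C`-linearly independent and `C`-span the kernel) if and only if `A` splits
over `K`, i.e. `A = (∂ - b₁)⋯(∂ - b_r)` for some `b₁, …, b_r ∈ K` (as an identity of
operators acting on `K`). -/
theorem stmt_10 {K : Type*} [Field K] [Algebra ℚ K] (D : Derivation ℚ K K)
    (hint : Function.Surjective fun x : K => D x)
    (hlog : ∀ a : K, ∃ y : K, y ≠ 0 ∧ D y / y = a)
    (r : ℕ) (a : Fin r → K) :
    (∃ yb : Fin r → K,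
      (∀ i, (⇑D)^[r] (yb i) + ∑ j : Fin r, a j * (⇑D)^[(j : ℕ)] (yb i) = 0) ∧
      (∀ c : Fin r → K, (∀ i, D (c i) = 0) → ∑ i, c i * yb i = 0 → ∀ i, c i = 0) ∧
      (∀ w : K, (⇑D)^[r] w + ∑ j : Fin r, a j * (⇑D)^[(j : ℕ)] w = 0 →
        ∃ c : Fin r → K, (∀ i, D (c i) = 0) ∧ w = ∑ i, c i * yb i)) ↔
    (∃ b : Fin r → K, ∀ w : K,
      (⇑D)^[r] w + ∑ j : Fin r, a j * (⇑D)^[(j : ℕ)] w =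
        (List.ofFn fun i : Fin r => fun u : K => D u - b i * u).foldr (· ∘ ·) id w) := by
  have hL : ∑ j : Fin r, a j • (⇑D)^[(j : ℕ)] ∈ D.orderLT r :=
    sum_mem fun j _ => Submodule.smul_mem _ _ (Derivation.iterate_mem_orderLT j.2)
  have hA : ∀ w, ((⇑D)^[r] + ∑ j : Fin r, a j • (⇑D)^[(j : ℕ)]) w =
      (⇑D)^[r] w + ∑ j : Fin r, a j * (⇑D)^[(j : ℕ)] w := by
    simp [Finset.sum_apply]
  change (∃ y, D.IsSolutionBasis (fun w => (⇑D)^[r] w + ∑ j : Fin r, a j * (⇑D)^[(j : ℕ)] w) y) ↔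
    ∃ b : Fin r → K, ∀ w, _ = D.splitOp b w
  simp only [← hA]
  constructor
  · rintro ⟨y, hy⟩
    obtain ⟨b, hb⟩ := Derivation.exists_splitOp_eq_of_isSolutionBasis hint hL hy
    exact ⟨b, congrFun hb⟩
  · rintro ⟨b, hb⟩
    rw [funext hb]
    exact Derivation.exists_isSolutionBasis_splitOp hint hlog b
end

section
/- Let (Γ, ψ) be an asymptotic couple, with notation γ' = γ + ψ(γ) for γ ∈ Γ^{≠}. For all α, β ∈ Γ with α ≠ β, α < (Γ^{>})' and β < (Γ^{>})' (meaning α < γ + ψ(γ) and β < γ + ψ(γ) for every γ > 0 in Γ), one has ψ(α − β) > min{α, β}. -/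
theorem psi_neg_of_zsmul_invariant {Γ : Type*} [AddCommGroup Γ] (ψ : Γ → Γ)
    (AC2 : ∀ (k : ℤ) (α : Γ), k ≠ 0 → α ≠ 0 → ψ (k • α) = ψ α) (γ : Γ) :
    ψ (-γ) = ψ γ := by
  rcases eq_or_ne γ 0 with rfl | hγ
  · rw [neg_zero]
  · simpa using AC2 (-1) γ (by norm_num) hγ

theorem lt_psi_sub_of_lt {Γ : Type*} [AddCommGroup Γ] [LinearOrder Γ] [IsOrderedAddMonoid Γ]
    (ψ : Γ → Γ) {α β : Γ} (hα : ∀ γ : Γ, 0 < γ → α < γ + ψ γ) (h : β < α) :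
    β < ψ (α - β) := by
  have := hα (α - β) (sub_pos.mpr h)
  rw [← sub_lt_iff_lt_add', sub_sub_cancel] at this
  exact this

theorem stmt_13_general {Γ : Type*} [AddCommGroup Γ] [LinearOrder Γ] [IsOrderedAddMonoid Γ] (ψ : Γ → Γ)
    (AC2 : ∀ (k : ℤ) (α : Γ), k ≠ 0 → α ≠ 0 → ψ (k • α) = ψ α)
    (α β : Γ) (hne : α ≠ β)
    (hα : ∀ γ : Γ, 0 < γ → α < γ + ψ γ)
    (hβ : ∀ γ : Γ, 0 < γ → β < γ + ψ γ) :
    min α β < ψ (α - β) := by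
  rcases hne.lt_or_gt with h | h
  · rw [min_eq_left h.le, ← neg_sub, psi_neg_of_zsmul_invariant ψ AC2]
    exact lt_psi_sub_of_lt ψ hβ h
  · rw [min_eq_right h.le]
    exact lt_psi_sub_of_lt ψ hα h

/-- In an asymptotic couple `(Γ, ψ)` (ordered abelian group `Γ` with
`ψ : Γ^{≠} → Γ` satisfying (AC1)–(AC3)): for all `α ≠ β` in `Γ` with
`α, β < (Γ^{>})'` (i.e. `α < γ + ψ(γ)` and `β < γ + ψ(γ)` for all `γ > 0`),
one has `ψ(α - β) > min {α, β}`. -/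
theorem stmt_13 {Γ : Type*} [AddCommGroup Γ] [LinearOrder Γ] [IsOrderedAddMonoid Γ] (ψ : Γ → Γ)
    (AC1 : ∀ α β : Γ, α ≠ 0 → β ≠ 0 → α + β ≠ 0 → min (ψ α) (ψ β) ≤ ψ (α + β))
    (AC2 : ∀ (k : ℤ) (α : Γ), k ≠ 0 → α ≠ 0 → ψ (k • α) = ψ α)
    (AC3 : ∀ α β : Γ, α ≠ 0 → β ≠ 0 → 0 < α → ψ β < α + ψ α)
    (α β : Γ) (hne : α ≠ β)
    (hα : ∀ γ : Γ, 0 < γ → α < γ + ψ γ)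
    (hβ : ∀ γ : Γ, 0 < γ → β < γ + ψ γ) :
    min α β < ψ (α - β) :=
  stmt_13_general ψ AC2 α β hne hα hβ
end

section
/- Let g₁, g₂ : [a, ∞) → ℝ be continuous with g₁(t), g₂(t) > 0 eventually, and let φ₂ : [a, ∞) → ℝ be continuous with φ₂(t) → ∞ as t → ∞. Suppose g₁(t)/g₂(t) → 1 as t → ∞, and there exist reals A, B, C, D with g₁² = g₂²·(A²·cos²(φ₂ + B) + C²·cos²(φ₂ + D)) on a neighborhood of ∞. Then the 2π-periodic function F(t) = A²cos²(t+B) + C²cos²(t+D) is identically equal to 1, and consequently g₁ = g₂ eventually. -/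
/-!
Where `g₂ > 0`, the identity says `(g₁ / g₂)² = F ∘ φ₂`, so `F ∘ φ₂ → 1`. By the intermediate
value theorem a continuous `φ₂` tending to `∞` takes every value of a half-line beyond any given
time, so `F` itself tends to `1` at `∞`; a periodic function with a limit at `∞` is constant.
-/

open Filter Topology Set

theorem ContinuousOn.map_atTop_eq_of_tendsto_atTop {a : ℝ} {φ : ℝ → ℝ}
    (hφc : ContinuousOn φ (Ici a)) (hφ : Tendsto φ atTop atTop) : map φ atTop = atTop := by
  refine le_antisymm hφ fun S hS => ?_
  obtain ⟨T, hT⟩ := mem_atTop_sets.1 (mem_map.1 hS)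
  set T' := max T a
  refine mem_atTop_sets.2 ⟨φ T', fun x hx => ?_⟩
  obtain ⟨t₁, hxt₁, hTt₁⟩ :=
    ((hφ.eventually_ge_atTop x).and (eventually_ge_atTop T')).exists
  obtain ⟨t, ht, rfl⟩ := intermediate_value_Icc hTt₁
    (hφc.mono fun _ hs => (le_max_right T a).trans hs.1) ⟨hx, hxt₁⟩
  exact hT t ((le_max_left T a).trans ht.1)

theorem Function.Periodic.eq_of_tendsto_atTop {X : Type*} [TopologicalSpace X] [T2Space X]
    {F : ℝ → X} {c : ℝ} {y : X} (hF : Function.Periodic F c) (hc : c ≠ 0)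
    (h : Tendsto F atTop (𝓝 y)) (x : ℝ) : F x = y := by
  wlog hc₀ : 0 < c generalizing c
  · exact this hF.neg (neg_ne_zero.2 hc) (by linarith [hc.lt_or_gt.resolve_right hc₀])
  have hx : Tendsto (fun n : ℕ => x + n * c) atTop atTop :=
    tendsto_atTop_add_const_left _ x (tendsto_natCast_atTop_atTop.atTop_mul_const hc₀)
  exact tendsto_nhds_unique tendsto_const_nhds ((h.comp hx).congr fun n => hF.nat_mul n x)

theorem periodic_sq_mul_cos_add_sq_add_sq_mul_cos_add_sq (A B C D : ℝ) :
    Function.Periodic (fun s => A ^ 2 * Real.cos (s + B) ^ 2 + C ^ 2 * Real.cos (s + D) ^ 2)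
      (2 * Real.pi) := fun s => by
  simp only [add_right_comm s (2 * Real.pi), Real.cos_add_two_pi]

theorem stmt_14_general (a : ℝ) (g₁ g₂ φ₂ : ℝ → ℝ)
    (hφc : ContinuousOn φ₂ (Set.Ici a))
    (hpos₁ : ∀ᶠ t in atTop, 0 < g₁ t) (hpos₂ : ∀ᶠ t in atTop, 0 < g₂ t)
    (hφtop : Tendsto φ₂ atTop atTop)
    (hratio : Tendsto (fun t => g₁ t / g₂ t) atTop (nhds 1))
    (A B C D : ℝ)
    (heq : ∀ᶠ t in atTop,
      g₁ t ^ 2 = g₂ t ^ 2 *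
        (A ^ 2 * Real.cos (φ₂ t + B) ^ 2 + C ^ 2 * Real.cos (φ₂ t + D) ^ 2)) :
    (∀ s : ℝ, A ^ 2 * Real.cos (s + B) ^ 2 + C ^ 2 * Real.cos (s + D) ^ 2 = 1) ∧
    ∀ᶠ t in atTop, g₁ t = g₂ t := by
  set F : ℝ → ℝ := fun s => A ^ 2 * Real.cos (s + B) ^ 2 + C ^ 2 * Real.cos (s + D) ^ 2
  have hFφ : Tendsto (F ∘ φ₂) atTop (𝓝 1) := by
    refine ((one_pow (M := ℝ) 2) ▸ hratio.pow 2).congr' ?_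
    filter_upwards [heq, hpos₂] with t ht hg₂
    rw [div_pow, ht, mul_div_cancel_left₀ _ (pow_ne_zero 2 hg₂.ne')]
    rfl
  have hF : ∀ s, F s = 1 := by
    refine (periodic_sq_mul_cos_add_sq_add_sq_mul_cos_add_sq A B C D).eq_of_tendsto_atTop
      Real.two_pi_pos.ne' ?_
    rwa [← hφc.map_atTop_eq_of_tendsto_atTop hφtop, tendsto_map'_iff]
  refine ⟨hF, ?_⟩
  filter_upwards [heq, hpos₁, hpos₂] with t ht hg₁ hg₂
  have hFt := hF (φ₂ t)
  simp only [F] at hFt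
  rw [hFt, mul_one] at ht
  exact (sq_eq_sq₀ hg₁.le hg₂.le).1 ht

/-- Key step in the uniqueness of amplitude functions: if `g₁/g₂ → 1`, `φ₂ → ∞`
continuously, and eventually
`g₁² = g₂²·(A²cos²(φ₂+B) + C²cos²(φ₂+D))`, then the `2π`-periodic function
`F(t) = A²cos²(t+B) + C²cos²(t+D)` is identically `1`, and hence `g₁ = g₂`
eventually. -/
theorem stmt_14 (a : ℝ) (g₁ g₂ φ₂ : ℝ → ℝ)
    (hg₁ : ContinuousOn g₁ (Set.Ici a)) (hg₂ : ContinuousOn g₂ (Set.Ici a))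
    (hφc : ContinuousOn φ₂ (Set.Ici a))
    (hpos₁ : ∀ᶠ t in atTop, 0 < g₁ t) (hpos₂ : ∀ᶠ t in atTop, 0 < g₂ t)
    (hφtop : Tendsto φ₂ atTop atTop)
    (hratio : Tendsto (fun t => g₁ t / g₂ t) atTop (nhds 1))
    (A B C D : ℝ)
    (heq : ∀ᶠ t in atTop,
      g₁ t ^ 2 = g₂ t ^ 2 *
        (A ^ 2 * Real.cos (φ₂ t + B) ^ 2 + C ^ 2 * Real.cos (φ₂ t + D) ^ 2)) :
    (∀ s : ℝ, A ^ 2 * Real.cos (s + B) ^ 2 + C ^ 2 * Real.cos (s + D) ^ 2 = 1) ∧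
    ∀ᶠ t in atTop, g₁ t = g₂ t :=
  stmt_14_general a g₁ g₂ φ₂ hφc hpos₁ hpos₂ hφtop hratio A B C D heq
end

section
/- Let f : [a, ∞) → ℝ be continuously differentiable with f(t) > 0 for all t, and y : [a, ∞) → ℝ twice continuously differentiable with y'' + f·y = 0, y not identically zero. Define u = y² + (y')²/f. Then u' = −f'·(y'/f)². Consequently, if f is (weakly) increasing on [a,∞) and t₀ < t₁ are points with y'(t₀) = y'(t₁) = 0, then |y(t₀)| ≥ |y(t₁)|; if f is (weakly) decreasing then |y(t₀)| ≤ |y(t₁)|. -/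
/-!
Along a solution of `y'' + f y = 0` with `f > 0`, the Sonin–Pólya function
`u = y² + (y')²/f` has `u' = -f' (y'/f)²`, because the terms `2 y y'` and `2 y' y''/f` cancel.
So `u` is antitone when `f` is monotone and monotone when `f` is antitone, and at critical
points of `y` it equals `y²`.
-/

open Set

noncomputable def soninPolya (f y y' : ℝ → ℝ) (s : ℝ) : ℝ := y s ^ 2 + y' s ^ 2 / f s

theorem soninPolya_of_deriv_eq_zero {f y y' : ℝ → ℝ} {t : ℝ} (h : y' t = 0) :
    soninPolya f y y' t = y t ^ 2 := by
  simp [soninPolya, h]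

theorem hasDerivAt_soninPolya {f y y' : ℝ → ℝ} {t f't y''t : ℝ}
    (hf : HasDerivAt f f't t) (hy : HasDerivAt y (y' t) t) (hy' : HasDerivAt y' y''t t)
    (hft : f t ≠ 0) (hode : y''t + f t * y t = 0) :
    HasDerivAt (soninPolya f y y') (-f't * (y' t / f t) ^ 2) t := by
  refine ((hy.pow 2).add ((hy'.pow 2).div hf hft)).congr_deriv ?_
  rw [show y''t = -(f t * y t) by linarith]
  field_simp
  simp only [Pi.pow_apply]
  ring

theorem HasDerivAt.nonneg_of_monotoneOn_Ici {g : ℝ → ℝ} {a t g' : ℝ} (hat : a ≤ t)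
    (hd : HasDerivAt g g' t) (hg : MonotoneOn g (Ici a)) : 0 ≤ g' := by
  have hsub : Ioi t ⊆ Ici a \ {t} := fun s hs => ⟨hat.trans (le_of_lt hs), ne_of_gt hs⟩
  have hacc : AccPt t (Filter.principal (Ici a)) :=
    accPt_principal_iff_nhdsWithin.mpr (Filter.NeBot.mono inferInstance (nhdsWithin_mono t hsub))
  exact hd.hasDerivWithinAt.nonneg_of_monotoneOn hacc hg

theorem HasDerivAt.nonpos_of_antitoneOn_Ici {g : ℝ → ℝ} {a t g' : ℝ} (hat : a ≤ t)
    (hd : HasDerivAt g g' t) (hg : AntitoneOn g (Ici a)) : g' ≤ 0 :=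
  neg_nonneg.mp (hd.neg.nonneg_of_monotoneOn_Ici hat hg.neg)

theorem monotoneOn_Ici_of_hasDerivAt_nonneg {g g' : ℝ → ℝ} {a : ℝ}
    (hd : ∀ t, a ≤ t → HasDerivAt g (g' t) t) (hg' : ∀ t, a ≤ t → 0 ≤ g' t) :
    MonotoneOn g (Ici a) := by
  refine monotoneOn_of_hasDerivWithinAt_nonneg (f' := g') (convex_Ici a)
    (fun t ht => (hd t ht).continuousAt.continuousWithinAt) (fun t ht => ?_) (fun t ht => ?_)
  all_goals rw [interior_Ici] at ht
  exacts [(hd t (le_of_lt ht)).hasDerivWithinAt, hg' t (le_of_lt ht)]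

theorem antitoneOn_Ici_of_hasDerivAt_nonpos {g g' : ℝ → ℝ} {a : ℝ}
    (hd : ∀ t, a ≤ t → HasDerivAt g (g' t) t) (hg' : ∀ t, a ≤ t → g' t ≤ 0) :
    AntitoneOn g (Ici a) := by
  have := monotoneOn_Ici_of_hasDerivAt_nonneg (fun t ht => (hd t ht).neg)
    (fun t ht => neg_nonneg.mpr (hg' t ht))
  simpa using this.neg

theorem stmt_16_general (a : ℝ) (f f' y y' y'' : ℝ → ℝ)
    (hf : ∀ t, a ≤ t → HasDerivAt f (f' t) t)
    (hy : ∀ t, a ≤ t → HasDerivAt y (y' t) t)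
    (hy' : ∀ t, a ≤ t → HasDerivAt y' (y'' t) t)
    (hfpos : ∀ t, a ≤ t → 0 < f t)
    (hode : ∀ t, a ≤ t → y'' t + f t * y t = 0) :
    (∀ t, a ≤ t →
      HasDerivAt (fun s => y s ^ 2 + y' s ^ 2 / f s) (-f' t * (y' t / f t) ^ 2) t) ∧
    (MonotoneOn f (Set.Ici a) →
      ∀ t₀ t₁, a ≤ t₀ → t₀ < t₁ → y' t₀ = 0 → y' t₁ = 0 → |y t₁| ≤ |y t₀|) ∧
    (AntitoneOn f (Set.Ici a) →
      ∀ t₀ t₁, a ≤ t₀ → t₀ < t₁ → y' t₀ = 0 → y' t₁ = 0 → |y t₀| ≤ |y t₁|) := by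
  have hu : ∀ t, a ≤ t →
      HasDerivAt (soninPolya f y y') (-f' t * (y' t / f t) ^ 2) t := fun t ht =>
    hasDerivAt_soninPolya (hf t ht) (hy t ht) (hy' t ht) (hfpos t ht).ne' (hode t ht)
  refine ⟨hu, fun hmono t₀ t₁ ht₀ h01 h₀ h₁ => ?_, fun hanti t₀ t₁ ht₀ h01 h₀ h₁ => ?_⟩
  · have hanti_u := antitoneOn_Ici_of_hasDerivAt_nonpos hu fun t ht =>
      mul_nonpos_of_nonpos_of_nonneg
        (neg_nonpos.mpr ((hf t ht).nonneg_of_monotoneOn_Ici ht hmono)) (sq_nonneg _)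
    have := hanti_u ht₀ (ht₀.trans h01.le) h01.le
    rw [soninPolya_of_deriv_eq_zero h₀, soninPolya_of_deriv_eq_zero h₁] at this
    exact sq_le_sq.mp this
  · have hmono_u := monotoneOn_Ici_of_hasDerivAt_nonneg hu fun t ht =>
      mul_nonneg (neg_nonneg.mpr ((hf t ht).nonpos_of_antitoneOn_Ici ht hanti)) (sq_nonneg _)
    have := hmono_u ht₀ (ht₀.trans h01.le) h01.le
    rw [soninPolya_of_deriv_eq_zero h₀, soninPolya_of_deriv_eq_zero h₁] at this
    exact sq_le_sq.mp this

/-- Sonin–Pólya: if `f > 0` is continuously differentiable and `y'' + f y = 0`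
with `y` not identically zero, then `u = y² + (y')²/f` satisfies
`u' = -f'·(y'/f)²`; consequently if `f` is increasing then `|y|` is decreasing along
critical points, and if `f` is decreasing then `|y|` is increasing along them. -/
theorem stmt_16 (a : ℝ) (f f' y y' y'' : ℝ → ℝ)
    (hf : ∀ t, a ≤ t → HasDerivAt f (f' t) t)
    (hy : ∀ t, a ≤ t → HasDerivAt y (y' t) t)
    (hy' : ∀ t, a ≤ t → HasDerivAt y' (y'' t) t)
    (hf'c : ContinuousOn f' (Set.Ici a)) (hy''c : ContinuousOn y'' (Set.Ici a))
    (hfpos : ∀ t, a ≤ t → 0 < f t)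
    (hode : ∀ t, a ≤ t → y'' t + f t * y t = 0)
    (hynz : ∃ t, a ≤ t ∧ y t ≠ 0) :
    (∀ t, a ≤ t →
      HasDerivAt (fun s => y s ^ 2 + y' s ^ 2 / f s) (-f' t * (y' t / f t) ^ 2) t) ∧
    (MonotoneOn f (Set.Ici a) →
      ∀ t₀ t₁, a ≤ t₀ → t₀ < t₁ → y' t₀ = 0 → y' t₁ = 0 → |y t₁| ≤ |y t₀|) ∧
    (AntitoneOn f (Set.Ici a) →
      ∀ t₀ t₁, a ≤ t₀ → t₀ < t₁ → y' t₀ = 0 → y' t₁ = 0 → |y t₀| ≤ |y t₁|) :=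
  stmt_16_general a f f' y y' y'' hf hy hy' hfpos hode
end
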